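/- Let n ≥ 1 be an integer. Let x, y be binary words of the same length and u, v binary words of the same length such that the concatenations xu and yv are valid Fibonacci representations. Then: (i) if [y] − n[x] ≤ −n−1, then [yv] − n[xu] ≤ −n−1; and (ii) if [y] − n[x] ≥ 2n, then [yv] − n[xu] ≥ n. In particular, once the difference [y] − n[x] leaves the interval I_n = [−n, 2n−1] below −n or at or above 2n, no valid right extension of the pair can have difference in [0, n−1]. -/

import Mathlib

/-- The Fibonacci (Zeckendorf) value of a binary word written msd-first:
`[x₁⋯x_ℓ] = Σ_j x_j · F_{ℓ−j+2}`. -/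
def fibVal : List Bool → ℕ
  | [] => 0
  | a :: rest => (if a then Nat.fib (rest.length + 2) else 0) + fibVal rest

/-- A binary word is a valid Fibonacci representation if it has no factor `11`. -/
def ValidFib (w : List Bool) : Prop :=
  w.Chain' (fun a b => a = false ∨ b = false)

/-- The numerical value of a single bit. -/
def bitVal (a : Bool) : ℤ := if a then 1 else 0

/-!
Write `⟨w⟩` for the value of `w` with every weight `F_k` lowered to `F_{k-1}`. Appending a
word `u` of length `m` gives `[xu] = [x] F_{m+1} + ⟨x⟩ F_m + [u]`, so the difference after the
extension is `d F_{m+1} + e F_m + [v] - n [u]` with `d = [y] - n[x]` and `e = ⟨y⟩ - n⟨x⟩`,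
while `0 ≤ [u], [v] < F_{m+2}` for valid `u`, `v`. The identity `⟨w⟩ = ⌊([w] + 1) / φ⌋`,
which holds for every binary word, ties `e` to `d`: `d ≤ -n - 1` forces `e ≤ -1` and `d ≥ 2n`
forces `e ≥ 0`, and the two bounds follow.
-/

open Nat (fib)
open Real goldenRatio

def fibShiftVal : List Bool → ℕ
  | [] => 0
  | a :: rest => (if a then fib (rest.length + 1) else 0) + fibShiftVal rest

theorem fibVal_append (x u : List Bool) :
    fibVal (x ++ u) =
      fibVal x * fib (u.length + 1) + fibShiftVal x * fib u.length + fibVal u := by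
  induction x with
  | nil => simp [fibVal, fibShiftVal]
  | cons a t ih =>
    have hfib := Nat.fib_add u.length (t.length + 1)
    rw [show u.length + (t.length + 1) + 1 = t.length + u.length + 2 by omega] at hfib
    cases a
    · simp [fibVal, fibShiftVal, ih]
    · simp only [List.cons_append, fibVal, ↓reduceIte, List.length_append, hfib, ih, fibShiftVal]
      ring

theorem fibShiftVal_append_singleton (w : List Bool) (a : Bool) :
    fibShiftVal (w ++ [a]) = fibVal w + fibVal [a] := by
  induction w with
  | nil => cases a <;> simp [fibVal, fibShiftVal]
  | cons c t ih =>
    cases c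
    · simp [fibVal, fibShiftVal, ih]
    · simp only [List.cons_append, fibShiftVal, ↓reduceIte, List.length_append, List.length_cons,
        List.length_nil, zero_add, ih, fibVal, Nat.fib_two, add_zero]
      ring

theorem fibVal_lt_fib : ∀ {w : List Bool}, ValidFib w → fibVal w < fib (w.length + 2)
  | [], _ => by simp [fibVal]
  | false :: t, h => by
    have := fibVal_lt_fib (w := t) (List.IsChain.tail h)
    simp only [fibVal, List.length_cons, Bool.false_eq_true, if_false, zero_add]
    exact this.trans_le (Nat.fib_mono (by omega))
  | [true], _ => by simp [fibVal, Nat.fib_add_two]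
  | true :: true :: _, h => absurd (List.isChain_cons_cons.mp h).1 (by simp)
  | true :: false :: t, h => by
    have := fibVal_lt_fib (w := t) (List.IsChain.tail (List.IsChain.tail h))
    have hfib : fib (t.length + 1 + 1 + 2) = fib (t.length + 2) + fib (t.length + 1 + 2) :=
      Nat.fib_add_two
    simp only [fibVal, ↓reduceIte, List.length_cons, Bool.false_eq_true, zero_add]
    omega

/-- Appending a bit `a` maps `ε = [w] φ⁻¹ - ⟨w⟩` to `-φ⁻¹ ε - a φ⁻²`, and both of these affine
maps send the interval into itself. -/
theorem fibVal_mul_inv_goldenRatio_sub_fibShiftVal_mem_Ioo (w : List Bool) :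
    (fibVal w * φ⁻¹ - fibShiftVal w : ℝ) ∈ Set.Ioo (-φ⁻¹) (1 - φ⁻¹) := by
  have hr : φ⁻¹ ^ 2 = 1 - φ⁻¹ := by rw [inv_goldenRatio]; linarith [goldenConj_sq]
  have hr0 : 0 < φ⁻¹ := inv_pos.2 goldenRatio_pos
  have hr1 : φ⁻¹ < 1 := inv_lt_one_of_one_lt₀ one_lt_goldenRatio
  generalize φ⁻¹ = r at hr hr0 hr1 ⊢
  induction w using List.reverseRecOn with
  | nil => simpa [fibVal, fibShiftVal] using ⟨hr0, hr1⟩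
  | append_singleton w a ih =>
    set ε := (fibVal w : ℝ) * r - fibShiftVal w
    have hstep : (fibVal (w ++ [a]) : ℝ) * r - fibShiftVal (w ++ [a]) =
        -r * ε - fibVal [a] * r ^ 2 := by
      rw [fibVal_append, fibShiftVal_append_singleton]
      simp only [List.length_singleton, Nat.fib_one]
      push_cast
      linear_combination (fibVal w + fibVal [a] : ℝ) * hr
    obtain ⟨hlo, hhi⟩ := ih
    rw [hstep]
    have hA : fibVal [a] = 0 ∨ fibVal [a] = 1 := by cases a <;> simp [fibVal]
    rcases hA with hA | hA <;> rw [hA] <;> push_cast <;> constructor <;>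
      nlinarith [mul_lt_mul_of_pos_left hlo hr0, mul_lt_mul_of_pos_left hhi hr0]

theorem fibShiftVal_eq_floor (w : List Bool) :
    fibShiftVal w = ⌊((fibVal w : ℝ) + 1) * φ⁻¹⌋₊ := by
  obtain ⟨hlo, hhi⟩ := fibVal_mul_inv_goldenRatio_sub_fibShiftVal_mem_Ioo w
  symm
  rw [Nat.floor_eq_iff (by positivity)]
  constructor <;> linarith

theorem floor_mul_lt_mul_floor {α : ℝ} (hα : 1 / 2 ≤ α) {n P Q : ℕ} (hn : 1 ≤ n)
    (h : Q + 2 * n ≤ n * P) : ⌊(Q : ℝ) * α⌋₊ < n * ⌊(P : ℝ) * α⌋₊ := by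
  have hP : (P : ℝ) * α < ⌊(P : ℝ) * α⌋₊ + 1 := Nat.lt_floor_add_one _
  have hQ : ((Q + 2 * n : ℕ) : ℝ) ≤ ((n * P : ℕ) : ℝ) := by exact_mod_cast h
  have hn' : (1 : ℝ) ≤ n := by exact_mod_cast hn
  have : (⌊(Q : ℝ) * α⌋₊ : ℝ) < n * ⌊(P : ℝ) * α⌋₊ := by
    push_cast at hQ
    calc (⌊(Q : ℝ) * α⌋₊ : ℝ) ≤ Q * α := Nat.floor_le (by positivity)
      _ ≤ (n * P - 2 * n) * α := by gcongr; linarith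
      _ ≤ n * (P * α) - n := by nlinarith
      _ < n * ⌊(P : ℝ) * α⌋₊ := by nlinarith
  exact_mod_cast this

theorem mul_floor_le_floor_mul {α : ℝ} (hα : 0 ≤ α) {n P Q : ℕ} (h : n * P ≤ Q) :
    n * ⌊(P : ℝ) * α⌋₊ ≤ ⌊(Q : ℝ) * α⌋₊ := by
  apply Nat.le_floor
  have hQ : ((n * P : ℕ) : ℝ) ≤ Q := by exact_mod_cast h
  push_cast at hQ ⊢
  calc (n : ℝ) * ⌊(P : ℝ) * α⌋₊ ≤ n * (P * α) := by gcongr; exact Nat.floor_le (by positivity)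
    _ ≤ Q * α := by rw [← mul_assoc]; gcongr

theorem fibShiftVal_sub_mul_le_neg_one {n : ℕ} (hn : 1 ≤ n) {x y : List Bool}
    (h : (fibVal y : ℤ) - n * fibVal x ≤ -(n : ℤ) - 1) :
    (fibShiftVal y : ℤ) - n * fibShiftVal x ≤ -1 := by
  have hlt := floor_mul_lt_mul_floor (α := φ⁻¹)
    (by rw [one_div]; exact inv_anti₀ goldenRatio_pos goldenRatio_lt_two.le) hn
    (P := fibVal x + 1) (Q := fibVal y + 1) (by zify; linarith)
  rw [fibShiftVal_eq_floor, fibShiftVal_eq_floor]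
  push_cast at hlt
  omega

theorem fibShiftVal_sub_mul_nonneg {n : ℕ} {x y : List Bool}
    (h : (fibVal y : ℤ) - n * fibVal x ≥ 2 * n) :
    (fibShiftVal y : ℤ) - n * fibShiftVal x ≥ 0 := by
  have hle := mul_floor_le_floor_mul (inv_pos.2 goldenRatio_pos).le
    (n := n) (P := fibVal x + 1) (Q := fibVal y + 1) (by zify; linarith)
  rw [fibShiftVal_eq_floor, fibShiftVal_eq_floor]
  push_cast at hle
  omega

theorem fibVal_append_sub_mul_le {n : ℕ} (hn : 1 ≤ n) {x y u v : List Bool}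
    (huv : u.length = v.length) (hv : ValidFib v)
    (h : (fibVal y : ℤ) - n * fibVal x ≤ -(n : ℤ) - 1) :
    (fibVal (y ++ v) : ℤ) - n * fibVal (x ++ u) ≤ -(n : ℤ) - 1 := by
  have he := fibShiftVal_sub_mul_le_neg_one hn h
  have hvlt := fibVal_lt_fib hv
  rw [fibVal_append, fibVal_append, huv]
  set m := v.length
  have hfib : fib (m + 2) = fib m + fib (m + 1) := Nat.fib_add_two
  have hF1 : 1 ≤ fib (m + 1) := Nat.fib_pos.2 (by omega)
  push_cast
  zify at hvlt hfib hF1 hn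
  nlinarith [mul_le_mul_of_nonneg_right h (by positivity : (0 : ℤ) ≤ fib (m + 1)),
    mul_le_mul_of_nonneg_right he (by positivity : (0 : ℤ) ≤ fib m),
    mul_le_mul_of_nonneg_left hF1 (by positivity : (0 : ℤ) ≤ n),
    mul_nonneg (by positivity : (0 : ℤ) ≤ n) (by positivity : (0 : ℤ) ≤ fibVal u)]

theorem fibVal_append_sub_mul_ge {n : ℕ} {x y u v : List Bool}
    (huv : u.length = v.length) (hu : ValidFib u)
    (h : (fibVal y : ℤ) - n * fibVal x ≥ 2 * n) :
    (fibVal (y ++ v) : ℤ) - n * fibVal (x ++ u) ≥ n := by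
  have he := fibShiftVal_sub_mul_nonneg h
  have hult := fibVal_lt_fib hu
  rw [fibVal_append, fibVal_append, ← huv]
  set m := u.length
  have hfib : fib (m + 2) = fib m + fib (m + 1) := Nat.fib_add_two
  have hmono : fib m ≤ fib (m + 1) := Nat.fib_mono (by omega)
  push_cast
  zify at hult hfib hmono
  nlinarith [mul_le_mul_of_nonneg_right h (by positivity : (0 : ℤ) ≤ fib (m + 1)),
    mul_nonneg he (by positivity : (0 : ℤ) ≤ fib m),
    mul_le_mul_of_nonneg_left hmono (by positivity : (0 : ℤ) ≤ n),
    mul_le_mul_of_nonneg_left hult (by positivity : (0 : ℤ) ≤ n)]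

theorem interval_I_n_general (n : ℕ) (hn : 1 ≤ n) (x y u v : List Bool)
    (huv : u.length = v.length)
    (hxu : ValidFib (x ++ u)) (hyv : ValidFib (y ++ v)) :
    ((fibVal y : ℤ) - n * fibVal x ≤ -(n : ℤ) - 1 →
      (fibVal (y ++ v) : ℤ) - n * fibVal (x ++ u) ≤ -(n : ℤ) - 1) ∧
    ((fibVal y : ℤ) - n * fibVal x ≥ 2 * n →
      (fibVal (y ++ v) : ℤ) - n * fibVal (x ++ u) ≥ n) ∧
    ((fibVal y : ℤ) - n * fibVal x ≤ -(n : ℤ) - 1 ∨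
        (fibVal y : ℤ) - n * fibVal x ≥ 2 * n →
      ¬ (0 ≤ (fibVal (y ++ v) : ℤ) - n * fibVal (x ++ u) ∧
          (fibVal (y ++ v) : ℤ) - n * fibVal (x ++ u) ≤ (n : ℤ) - 1)) := by
  have below := fibVal_append_sub_mul_le (x := x) (y := y) hn huv hyv.right_of_append
  have above := fibVal_append_sub_mul_ge (x := x) (y := y) (n := n) huv hxu.right_of_append
  refine ⟨below, above, ?_⟩
  rintro (h | h) ⟨hlo, hhi⟩
  · linarith [below h]
  · linarith [above h]

theorem interval_I_n (n : ℕ) (hn : 1 ≤ n) (x y u v : List Bool)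
    (hxy : x.length = y.length) (huv : u.length = v.length)
    (hxu : ValidFib (x ++ u)) (hyv : ValidFib (y ++ v)) :
    ((fibVal y : ℤ) - n * fibVal x ≤ -(n : ℤ) - 1 →
      (fibVal (y ++ v) : ℤ) - n * fibVal (x ++ u) ≤ -(n : ℤ) - 1) ∧
    ((fibVal y : ℤ) - n * fibVal x ≥ 2 * n →
      (fibVal (y ++ v) : ℤ) - n * fibVal (x ++ u) ≥ n) ∧
    ((fibVal y : ℤ) - n * fibVal x ≤ -(n : ℤ) - 1 ∨
        (fibVal y : ℤ) - n * fibVal x ≥ 2 * n →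
      ¬ (0 ≤ (fibVal (y ++ v) : ℤ) - n * fibVal (x ++ u) ∧
          (fibVal (y ++ v) : ℤ) - n * fibVal (x ++ u) ≤ (n : ℤ) - 1)) :=
  interval_I_n_general n hn x y u v huv hxu hyv
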